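/- arXiv:cs/0410003 — 4 statements merged into one kernel-verified Lean document; each statement's English description precedes it below -/
import Mathlib

section
/- Let P, Q, R be compact metric spaces, φ : P × Q × R → ℝ continuous, and let P_n, Q_n, R_n be sequences of nonempty subsets dense in P, Q, R respectively. Then min_{p∈P} max_{q∈Q} min_{r∈R} φ(p,q,r) = lim_{n→∞} inf_{p∈P_n} sup_{q∈Q_n} inf_{r∈R_n} φ(p,q,r). -/
/-!
The sequence is in fact constant. The infimum or supremum of a continuous function over a dense
set equals the one over the whole space, and over a compact factor the partial optima
`(p, q) ↦ ⨅ r, φ p q r` and `p ↦ ⨆ q, ⨅ r, φ p q r` are again continuous. So the dense sets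
`Rn n`, `Qn n`, `Pn n` can be replaced by `R`, `Q`, `P` one quantifier at a time.
-/

section

variable {α β γ : Type*} [ConditionallyCompleteLinearOrder α] [TopologicalSpace α] [OrderTopology α]
  [TopologicalSpace β] [TopologicalSpace γ] [CompactSpace β]

theorem continuous_iSup_of_compactSpace {f : γ → β → α} (hf : Continuous ↿f) :
    Continuous fun x => ⨆ y, f x y := by
  simpa only [Set.image_univ, sSup_range] using isCompact_univ.continuous_sSup hf

theorem continuous_iInf_of_compactSpace {f : γ → β → α} (hf : Continuous ↿f) :
    Continuous fun x => ⨅ y, f x y :=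
  continuous_iSup_of_compactSpace (α := αᵒᵈ) hf

theorem Dense.iInf_iSup_iInf_eq {P Q R : Type*} [TopologicalSpace P] [TopologicalSpace Q]
    [TopologicalSpace R] [CompactSpace Q] [CompactSpace R] {φ : P → Q → R → α}
    (hφ : Continuous fun x : P × Q × R => φ x.1 x.2.1 x.2.2)
    {S : Set P} {T : Set Q} {U : Set R} (hS : Dense S) (hT : Dense T) (hU : Dense U) :
    ⨅ p : S, ⨆ q : T, ⨅ r : U, φ p q r = ⨅ p, ⨆ q, ⨅ r, φ p q r := by
  have hinner : Continuous fun x : P × Q => ⨅ r, φ x.1 x.2 r :=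
    continuous_iInf_of_compactSpace (f := fun (x : P × Q) r => φ x.1 x.2 r)
      (hφ.comp (Homeomorph.prodAssoc P Q R).continuous)
  have hmiddle : Continuous fun p => ⨆ q, ⨅ r, φ p q r :=
    continuous_iSup_of_compactSpace (f := fun p q => ⨅ r, φ p q r) hinner
  calc ⨅ p : S, ⨆ q : T, ⨅ r : U, φ p q r
      = ⨅ p : S, ⨆ q : T, ⨅ r, φ p q r :=
        iInf_congr fun p => iSup_congr fun q =>
          hU.ciInf' (hφ.comp ((Continuous.prodMk_right (p : P)).comp (.prodMk_right (q : Q))))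
    _ = ⨅ p : S, ⨆ q, ⨅ r, φ p q r :=
        iInf_congr fun p => hT.ciSup' (hinner.comp (.prodMk_right (p : P)))
    _ = ⨅ p, ⨆ q, ⨅ r, φ p q r := hS.ciInf' hmiddle

end

theorem stmt6_general {P Q R : Type*} [MetricSpace P] [MetricSpace Q] [MetricSpace R]
    [CompactSpace Q] [CompactSpace R]
    (φ : P → Q → R → ℝ)
    (hφ : Continuous fun x : P × Q × R => φ x.1 x.2.1 x.2.2)
    (Pn : ℕ → Set P) (Qn : ℕ → Set Q) (Rn : ℕ → Set R)
    (hPd : ∀ n, Dense (Pn n)) (hQd : ∀ n, Dense (Qn n)) (hRd : ∀ n, Dense (Rn n)) :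
    Filter.Tendsto
      (fun n => ⨅ p : Pn n, ⨆ q : Qn n, ⨅ r : Rn n, φ p q r)
      Filter.atTop
      (nhds (⨅ p : P, ⨆ q : Q, ⨅ r : R, φ p q r)) := by
  simp only [fun n => (hPd n).iInf_iSup_iInf_eq hφ (hQd n) (hRd n)]
  exact tendsto_const_nhds

theorem stmt6 {P Q R : Type*} [MetricSpace P] [MetricSpace Q] [MetricSpace R]
    [CompactSpace P] [CompactSpace Q] [CompactSpace R]
    [Nonempty P] [Nonempty Q] [Nonempty R]
    (φ : P → Q → R → ℝ)
    (hφ : Continuous fun x : P × Q × R => φ x.1 x.2.1 x.2.2)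
    (Pn : ℕ → Set P) (Qn : ℕ → Set Q) (Rn : ℕ → Set R)
    (hPne : ∀ n, (Pn n).Nonempty) (hQne : ∀ n, (Qn n).Nonempty)
    (hRne : ∀ n, (Rn n).Nonempty)
    (hPd : ∀ n, Dense (Pn n)) (hQd : ∀ n, Dense (Qn n)) (hRd : ∀ n, Dense (Rn n)) :
    Filter.Tendsto
      (fun n => ⨅ p : Pn n, ⨆ q : Qn n, ⨅ r : Rn n, φ p q r)
      Filter.atTop
      (nhds (⨅ p : P, ⨆ q : Q, ⨅ r : R, φ p q r)) :=
  stmt6_general φ hφ Pn Qn Rn hPd hQd hRd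
end

section
/- For probability mass functions p, p' on a finite set Y with total variation ‖p-p'‖₁ = Σ_y |p(y)-p'(y)| ≤ θ ≤ 1/2, the Shannon entropies satisfy |H(p) - H(p')| ≤ θ * log₂(|Y|/θ). -/
/-!
Write `η x = -x log x`, so that the entropy is `∑ η (p y)` (up to the factor `log 2`). For
`|a - b| ≤ 1/2` on `[0, 1]` one has `|η a - η b| ≤ η |a - b|`: one direction is subadditivity of
`η`, the other follows because `η x - η (x + d)` increases in `x` and `η (1 - d) ≤ η d` for
`d ≤ 1/2`. Summing, `|H(p) - H(p')| ≤ ∑ η |p y - p' y|`, and Jensen's inequality for the concave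
`η` bounds this by `|Y| η (ε / |Y|) = ε log (|Y| / ε)` with `ε = ‖p - p'‖₁`. Finally `η` increases
on `[0, 1/e]`, which contains `ε / |Y| ≤ θ / |Y| ≤ 1/4` as soon as `|Y| ≥ 2`; for `|Y| = 1`
there is nothing to prove since then `p = p'`.
-/

open Finset

namespace Real

lemma mul_log_le_mul_log_of_le {x y : ℝ} (hx : 0 ≤ x) (hxy : x ≤ y) :
    x * log x ≤ x * log y := by
  rcases hx.eq_or_lt with rfl | hx
  · simp
  · exact mul_le_mul_of_nonneg_left (log_le_log hx hxy) hx.le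

lemma negMulLog_add_le {a b : ℝ} (ha : 0 ≤ a) (hb : 0 ≤ b) :
    negMulLog (a + b) ≤ negMulLog a + negMulLog b := by
  have hA := mul_log_le_mul_log_of_le ha (le_add_of_nonneg_right hb)
  have hB := mul_log_le_mul_log_of_le hb (le_add_of_nonneg_left ha)
  simp only [negMulLog]
  linarith

lemma negMulLog_one_sub_le {d : ℝ} (hd₀ : 0 ≤ d) (hd : d ≤ 1 / 2) :
    negMulLog (1 - d) ≤ negMulLog d := by
  let f : ℝ → ℝ := fun x ↦ negMulLog x - negMulLog (1 - x)
  have hf' : ∀ x ∈ Set.Ioo (0 : ℝ) (1 / 2), HasDerivAt f (-log x - log (1 - x) - 2) x := by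
    intro x ⟨hx₀, hx⟩
    exact ((hasDerivAt_negMulLog hx₀.ne').sub ((hasDerivAt_negMulLog (by linarith : 1 - x ≠ 0)).comp
      x ((hasDerivAt_id x).const_sub 1))).congr_deriv (by ring)
  have hf'' : ∀ x ∈ Set.Ioo (0 : ℝ) (1 / 2),
      HasDerivAt (fun x ↦ -log x - log (1 - x) - 2) (-x⁻¹ + (1 - x)⁻¹) x := by
    intro x ⟨hx₀, hx⟩
    exact (((hasDerivAt_log hx₀.ne').neg.sub ((hasDerivAt_log (by linarith : 1 - x ≠ 0)).comp
      x ((hasDerivAt_id x).const_sub 1))).sub_const 2).congr_deriv (by ring)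
  have hconc : ConcaveOn ℝ (Set.Icc 0 (1 / 2)) f := by
    refine concaveOn_of_hasDerivWithinAt2_nonpos (f' := fun x ↦ -log x - log (1 - x) - 2)
      (f'' := fun x ↦ -x⁻¹ + (1 - x)⁻¹) (convex_Icc _ _) (by fun_prop)
      (fun x hx ↦ ?_) (fun x hx ↦ ?_) (fun x hx ↦ ?_) <;> rw [interior_Icc] at hx
    · exact (hf' x hx).hasDerivWithinAt
    · exact (hf'' x hx).hasDerivWithinAt
    · have : (1 - x)⁻¹ ≤ x⁻¹ := inv_anti₀ hx.1 (by linarith [hx.2])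
      linarith
  have hf₀ : f 0 = 0 := by simp [f]
  have hf₁ : f (1 / 2) = 0 := by norm_num [f]
  have h := hconc.ge_on_segment (x := 0) (y := 1 / 2) (z := d) (by norm_num) (by norm_num)
    (by rw [segment_eq_Icc (by norm_num)]; exact ⟨hd₀, hd⟩)
  rw [hf₀, hf₁, min_self] at h
  exact sub_nonneg.1 h

lemma monotoneOn_negMulLog_sub_negMulLog_add {d : ℝ} (hd : 0 ≤ d) :
    MonotoneOn (fun x ↦ negMulLog x - negMulLog (x + d)) (Set.Ici 0) := by
  refine monotoneOn_of_hasDerivWithinAt_nonneg (f' := fun x ↦ log (x + d) - log x)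
    (convex_Ici 0) (by fun_prop) (fun x hx ↦ ?_) (fun x hx ↦ ?_) <;>
    rw [interior_Ici] at hx
  · have hx : 0 < x := hx
    have hxd : x + d ≠ 0 := by positivity
    exact (((hasDerivAt_negMulLog hx.ne').sub ((hasDerivAt_negMulLog hxd).comp
      x ((hasDerivAt_id x).add_const d))).congr_deriv
      (by ring : _ = log (x + d) - log x)).hasDerivWithinAt
  · exact sub_nonneg.2 (log_le_log hx (le_add_of_nonneg_right hd))

lemma negMulLog_sub_negMulLog_add_le {a d : ℝ} (ha : 0 ≤ a) (hd₀ : 0 ≤ d) (had : a + d ≤ 1)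
    (hd : d ≤ 1 / 2) : negMulLog a - negMulLog (a + d) ≤ negMulLog d :=
  calc negMulLog a - negMulLog (a + d) ≤ negMulLog (1 - d) - negMulLog (1 - d + d) :=
        monotoneOn_negMulLog_sub_negMulLog_add hd₀ ha (Set.mem_Ici.2 (by linarith)) (by linarith)
    _ = negMulLog (1 - d) := by simp
    _ ≤ negMulLog d := negMulLog_one_sub_le hd₀ hd

lemma abs_negMulLog_sub_negMulLog_le {a b : ℝ} (ha₀ : 0 ≤ a) (hb₀ : 0 ≤ b) (ha : a ≤ 1)
    (hb : b ≤ 1) (hab : |a - b| ≤ 1 / 2) :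
    |negMulLog a - negMulLog b| ≤ negMulLog |a - b| := by
  wlog h : a ≤ b generalizing a b
  · rw [abs_sub_comm, abs_sub_comm a] at *
    exact this hb₀ ha₀ hb ha hab (le_of_not_ge h)
  obtain ⟨d, hd₀, rfl⟩ : ∃ d, 0 ≤ d ∧ b = a + d := ⟨b - a, by linarith, by ring⟩
  rw [show |a - (a + d)| = d by simp [abs_of_nonneg hd₀]] at hab ⊢
  rw [abs_le]
  constructor
  · linarith [negMulLog_add_le ha₀ hd₀]
  · exact negMulLog_sub_negMulLog_add_le ha₀ hd₀ hb hab

lemma monotoneOn_negMulLog : MonotoneOn negMulLog (Set.Icc 0 (exp (-1))) := by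
  rw [negMulLog_eq_neg]
  exact mul_log_strictAntiOn.neg.monotoneOn

lemma mul_negMulLog_div {K : ℝ} (hK : K ≠ 0) (t : ℝ) :
    K * negMulLog (t / K) = t * log (K / t) := by
  rw [negMulLog, ← inv_div, log_inv]
  field_simp

lemma neg_sum_mul_logb {Y : Type*} [Fintype Y] (b : ℝ) (p : Y → ℝ) :
    -∑ y, p y * logb b (p y) = (∑ y, negMulLog (p y)) / log b := by
  simp only [logb, negMulLog, sum_div, ← sum_neg_distrib]
  congr! 1 with y
  ring

end Real

open Real

section Finite

variable {Y : Type*} [Fintype Y]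

lemma sum_negMulLog_le_card_mul_negMulLog [Nonempty Y] {e : Y → ℝ} (he : ∀ y, 0 ≤ e y) :
    ∑ y, negMulLog (e y) ≤ Fintype.card Y * negMulLog ((∑ y, e y) / Fintype.card Y) := by
  have hK : (0 : ℝ) < Fintype.card Y := by exact_mod_cast Fintype.card_pos
  have h := concaveOn_negMulLog.le_map_sum (t := univ) (w := fun _ ↦ (Fintype.card Y : ℝ)⁻¹)
    (p := e) (fun _ _ ↦ by positivity) (by simp [card_univ, hK.ne']) (fun y _ ↦ he y)
  simp only [smul_eq_mul, inv_mul_eq_div] at h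
  rwa [← sum_div, ← sum_div, div_le_iff₀' hK] at h

lemma le_one_of_sum_eq_one {p : Y → ℝ} (hp : ∀ y, 0 ≤ p y) (hp1 : ∑ y, p y = 1) (y : Y) :
    p y ≤ 1 :=
  hp1 ▸ single_le_sum (fun i _ ↦ hp i) (mem_univ y)

lemma abs_sum_negMulLog_sub_le {p q : Y → ℝ} (hp : ∀ y, 0 ≤ p y) (hp1 : ∑ y, p y = 1)
    (hq : ∀ y, 0 ≤ q y) (hq1 : ∑ y, q y = 1) (hpq : ∑ y, |p y - q y| ≤ 1 / 2) :
    |∑ y, negMulLog (p y) - ∑ y, negMulLog (q y)| ≤ ∑ y, negMulLog |p y - q y| := by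
  rw [← sum_sub_distrib]
  refine (abs_sum_le_sum_abs _ _).trans (sum_le_sum fun y _ ↦ ?_)
  refine abs_negMulLog_sub_negMulLog_le (hp y) (hq y) (le_one_of_sum_eq_one hp hp1 y)
    (le_one_of_sum_eq_one hq hq1 y) ?_
  exact (single_le_sum (fun i _ ↦ abs_nonneg (p i - q i)) (mem_univ y)).trans hpq

lemma abs_sum_negMulLog_sub_le_card_mul_negMulLog {p q : Y → ℝ} {θ : ℝ} (hp : ∀ y, 0 ≤ p y)
    (hp1 : ∑ y, p y = 1) (hq : ∀ y, 0 ≤ q y) (hq1 : ∑ y, q y = 1)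
    (hpq : ∑ y, |p y - q y| ≤ θ) (hθ : θ ≤ 1 / 2) (hY : 1 < Fintype.card Y) :
    |∑ y, negMulLog (p y) - ∑ y, negMulLog (q y)|
      ≤ Fintype.card Y * negMulLog (θ / Fintype.card Y) := by
  have : Nonempty Y := Fintype.card_pos_iff.1 (by omega)
  have hK : (2 : ℝ) ≤ Fintype.card Y := Nat.ofNat_le_cast.2 hY
  have hθ₀ : 0 ≤ θ := (sum_nonneg fun y _ ↦ abs_nonneg _).trans hpq
  have hθK : θ / Fintype.card Y ≤ exp (-1) := by
    rw [div_le_iff₀ (by positivity)]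
    nlinarith [exp_neg_one_gt_d9]
  calc _ ≤ ∑ y, negMulLog |p y - q y| := abs_sum_negMulLog_sub_le hp hp1 hq hq1 (hpq.trans hθ)
    _ ≤ Fintype.card Y * negMulLog ((∑ y, |p y - q y|) / Fintype.card Y) :=
      sum_negMulLog_le_card_mul_negMulLog fun y ↦ abs_nonneg _
    _ ≤ Fintype.card Y * negMulLog (θ / Fintype.card Y) := by
      refine mul_le_mul_of_nonneg_left (monotoneOn_negMulLog ⟨by positivity, ?_⟩
        ⟨by positivity, hθK⟩ (by gcongr)) (by positivity)
      exact (div_le_div_of_nonneg_right hpq (by positivity)).trans hθK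

end Finite

theorem stmt7 {Y : Type*} [Fintype Y] (p p' : Y → ℝ) (θ : ℝ)
    (hp : ∀ y, 0 ≤ p y) (hp1 : ∑ y, p y = 1)
    (hp' : ∀ y, 0 ≤ p' y) (hp'1 : ∑ y, p' y = 1)
    (htv : ∑ y, |p y - p' y| ≤ θ) (hθ : θ ≤ 1 / 2) :
    |(-∑ y, p y * Real.logb 2 (p y)) - (-∑ y, p' y * Real.logb 2 (p' y))|
      ≤ θ * Real.logb 2 ((Fintype.card Y : ℝ) / θ) := by
  set K : ℝ := (Fintype.card Y : ℝ)
  have hθ₀ : 0 ≤ θ := (sum_nonneg fun y _ ↦ abs_nonneg _).trans htv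
  have : Nonempty Y := (nonempty_of_sum_ne_zero (hp1 ▸ one_ne_zero)).to_type
  have hK : 1 ≤ K := Nat.one_le_cast.2 Fintype.card_pos
  suffices h : |∑ y, negMulLog (p y) - ∑ y, negMulLog (p' y)| ≤ K * negMulLog (θ / K) by
    rw [neg_sum_mul_logb, neg_sum_mul_logb, ← sub_div, abs_div, abs_of_pos (log_pos one_lt_two),
      logb, ← mul_div_assoc, ← mul_negMulLog_div (by positivity)]
    exact div_le_div_of_nonneg_right h (log_pos one_lt_two).le
  rcases Nat.lt_or_ge 1 (Fintype.card Y) with hY₂ | hY₁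
  · exact abs_sum_negMulLog_sub_le_card_mul_negMulLog hp hp1 hp' hp'1 htv hθ hY₂
  · have : Subsingleton Y := Fintype.card_le_one_iff_subsingleton.1 hY₁
    have hpp' : p = p' := funext fun y ↦ by
      rw [← Fintype.sum_subsingleton p y, ← Fintype.sum_subsingleton p' y, hp1, hp'1]
    rw [hpp', sub_self, abs_zero]
    exact mul_nonneg (by positivity) (negMulLog_nonneg (by positivity)
      ((div_le_one (by positivity)).2 (by linarith)))
end

section
/- Let l ≥ |Y| ≥ 2 and let p, p̃ be p.m.f.s on finite Y with min values ≥ 1/l. Then the Kullback–Leibler divergences satisfy |D(p̃‖p) − D(Φ_l p̃ ‖ Φ_l p)| ≤ 2(|Y|+1) · (log₂ l)²/l, where Φ_l is the log-uniform pmf quantizer. -/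
/-!
Termwise,
`pt log(pt/p) − Φpt log(Φpt/Φp) = pt log(Φp/p) − pt log(Φpt/pt) + (pt − Φpt) log(Φpt/Φp)`,
so the difference of the divergences is at most the two quantizer errors `(log₂ l)/l`
(averaged against `pt`) plus the total variation `‖pt − Φpt‖₁` times `max |log₂(Φpt/Φp)|`.
The latter is at most `log₂ l`, because all values of the quantized pmfs lie in `[1/l, 1]`.
-/

open Real Finset

section Divergence

variable {ι : Type*} (s : Finset ι)

lemma le_one_of_sum_eq_one_s11 {f : ι → ℝ} (hf : ∀ i ∈ s, 0 ≤ f i)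
    (hsum : ∑ i ∈ s, f i = 1) {i : ι} (hi : i ∈ s) : f i ≤ 1 :=
  hsum ▸ single_le_sum hf hi

lemma abs_sum_mul_le_sum_abs_mul {g f : ι → ℝ} {c : ℝ} (hf : ∀ i ∈ s, |f i| ≤ c) :
    |∑ i ∈ s, g i * f i| ≤ (∑ i ∈ s, |g i|) * c := by
  calc |∑ i ∈ s, g i * f i| ≤ ∑ i ∈ s, |g i * f i| := abs_sum_le_sum_abs _ _
    _ ≤ ∑ i ∈ s, |g i| * c := by
        gcongr with i hi
        rw [abs_mul]
        exact mul_le_mul_of_nonneg_left (hf i hi) (abs_nonneg _)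
    _ = (∑ i ∈ s, |g i|) * c := (sum_mul _ _ _).symm

lemma mul_logb_div_sub_mul_logb_div (B : ℝ) {a b a' b' : ℝ}
    (ha : a ≠ 0) (hb : b ≠ 0) (ha' : a' ≠ 0) (hb' : b' ≠ 0) :
    a * logb B (a / b) - a' * logb B (a' / b')
      = a * logb B (b' / b) - a * logb B (a' / a) + (a - a') * logb B (a' / b') := by
  rw [logb_div ha hb, logb_div ha' hb', logb_div hb' hb, logb_div ha' ha]
  ring

lemma abs_sum_mul_logb_div_sub_le (B : ℝ) {q r q' r' : ι → ℝ}
    (hq : ∀ i ∈ s, 0 < q i) (hr : ∀ i ∈ s, 0 < r i)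
    (hq' : ∀ i ∈ s, 0 < q' i) (hr' : ∀ i ∈ s, 0 < r' i) (hq1 : ∑ i ∈ s, q i = 1)
    {εr εq δ M : ℝ} (hεr : ∀ i ∈ s, |logb B (r' i / r i)| ≤ εr)
    (hεq : ∀ i ∈ s, |logb B (q' i / q i)| ≤ εq) (hδ : ∑ i ∈ s, |q i - q' i| ≤ δ)
    (hM : ∀ i ∈ s, |logb B (q' i / r' i)| ≤ M) :
    |(∑ i ∈ s, q i * logb B (q i / r i)) - ∑ i ∈ s, q' i * logb B (q' i / r' i)|
      ≤ εr + εq + δ * M := by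
  have hq_abs : ∑ i ∈ s, |q i| = 1 := by
    rw [← hq1]
    exact sum_congr rfl fun i hi => abs_of_pos (hq i hi)
  have hM0 : 0 ≤ M := by
    rcases s.eq_empty_or_nonempty with rfl | ⟨i, hi⟩
    · simp at hq1
    · exact (abs_nonneg _).trans (hM i hi)
  have hsplit : (∑ i ∈ s, q i * logb B (q i / r i)) - ∑ i ∈ s, q' i * logb B (q' i / r' i)
      = (∑ i ∈ s, q i * logb B (r' i / r i)) - (∑ i ∈ s, q i * logb B (q' i / q i))
        + ∑ i ∈ s, (q i - q' i) * logb B (q' i / r' i) := by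
    simp only [← sum_sub_distrib, ← sum_add_distrib]
    exact sum_congr rfl fun i hi => mul_logb_div_sub_mul_logb_div B
      (hq i hi).ne' (hr i hi).ne' (hq' i hi).ne' (hr' i hi).ne'
  have hA := abs_sum_mul_le_sum_abs_mul s (g := q) hεr
  have hB := abs_sum_mul_le_sum_abs_mul s (g := q) hεq
  have hC := abs_sum_mul_le_sum_abs_mul s (g := fun i => q i - q' i) hM
  rw [hq_abs, one_mul] at hA hB
  rw [hsplit]
  refine (abs_add_le _ _).trans ((add_le_add_left (abs_sub _ _) _).trans ?_)
  gcongr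
  exact hC.trans (mul_le_mul_of_nonneg_right hδ hM0)

end Divergence

lemma logb_div_le_logb {B l x y : ℝ} (hB : 1 < B) (hl : 0 < l)
    (hx : 0 < x) (hx1 : x ≤ 1) (hy : 1 / l ≤ y) : logb B (x / y) ≤ logb B l := by
  have hy0 : 0 < y := (one_div_pos.2 hl).trans_le hy
  refine logb_le_logb_of_le hB (div_pos hx hy0) ?_
  rw [div_le_iff₀ hy0]
  calc x ≤ l * (1 / l) := by rwa [mul_one_div_cancel hl.ne']
    _ ≤ l * y := by gcongr

lemma abs_logb_div_le_logb {B l a b : ℝ} (hB : 1 < B) (hl : 0 < l)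
    (ha : 1 / l ≤ a) (ha1 : a ≤ 1) (hb : 1 / l ≤ b) (hb1 : b ≤ 1) :
    |logb B (a / b)| ≤ logb B l := by
  have ha0 : 0 < a := (one_div_pos.2 hl).trans_le ha
  have hb0 : 0 < b := (one_div_pos.2 hl).trans_le hb
  have hba := logb_div_le_logb hB hl hb0 hb1 ha
  rw [← inv_div, logb_inv] at hba
  exact abs_le.2 ⟨by linarith, logb_div_le_logb hB hl ha0 ha1 hb⟩

lemma log_le_logb_two {x : ℝ} (hx : 1 ≤ x) : log x ≤ logb 2 x := by
  rw [logb, le_div_iff₀ (log_pos one_lt_two)]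
  nlinarith [log_two_lt_d9, log_nonneg hx]

lemma one_le_logb_two {x : ℝ} (hx : 2 ≤ x) : 1 ≤ logb 2 x := by
  rw [le_logb_iff_rpow_le one_lt_two (by linarith), rpow_one]
  exact hx

theorem stmt11_general {Y : Type*} [Fintype Y] (l : ℕ) (hY2 : 2 ≤ Fintype.card Y)
    (hlY : Fintype.card Y ≤ l)
    (p pt Φp Φpt : Y → ℝ)
    (hp : ∀ y, (1 : ℝ) / l ≤ p y)
    (hpt : ∀ y, (1 : ℝ) / l ≤ pt y) (hpt1 : ∑ y, pt y = 1)
    (hΦp : ∀ y, (1 : ℝ) / l ≤ Φp y) (hΦp1 : ∑ y, Φp y = 1)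
    (hΦpt : ∀ y, (1 : ℝ) / l ≤ Φpt y) (hΦpt1 : ∑ y, Φpt y = 1)
    (hlog1 : ∀ y, |Real.logb 2 (Φp y / p y)| ≤ Real.logb 2 l / l)
    (hlog2 : ∀ y, |Real.logb 2 (Φpt y / pt y)| ≤ Real.logb 2 l / l)
    (htv : ∑ y, |pt y - Φpt y| ≤ ((Fintype.card Y : ℝ) + 1) * Real.log l / l) :
    |(∑ y, pt y * Real.logb 2 (pt y / p y))
        - (∑ y, Φpt y * Real.logb 2 (Φpt y / Φp y))|
      ≤ 2 * ((Fintype.card Y : ℝ) + 1) * (Real.logb 2 l) ^ 2 / l := by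
  have hl : (2 : ℝ) ≤ l := by exact_mod_cast hY2.trans hlY
  have hK : (2 : ℝ) ≤ Fintype.card Y := by exact_mod_cast hY2
  have hl0 : (0 : ℝ) < l := by linarith
  have hpos {f : Y → ℝ} (hf : ∀ y, (1 : ℝ) / l ≤ f y) (y : Y) (_ : y ∈ univ) : 0 < f y :=
    (one_div_pos.2 hl0).trans_le (hf y)
  have hM (y : Y) (_ : y ∈ univ) : |logb 2 (Φpt y / Φp y)| ≤ logb 2 l :=
    abs_logb_div_le_logb one_lt_two hl0 (hΦpt y)
      (le_one_of_sum_eq_one_s11 _ (fun z hz => (hpos hΦpt z hz).le) hΦpt1 (mem_univ y))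
      (hΦp y) (le_one_of_sum_eq_one_s11 _ (fun z hz => (hpos hΦp z hz).le) hΦp1 (mem_univ y))
  have key := abs_sum_mul_logb_div_sub_le univ 2 (hpos hpt) (hpos hp) (hpos hΦpt) (hpos hΦp)
    hpt1 (fun y _ => hlog1 y) (fun y _ => hlog2 y) htv hM
  have hL1 := one_le_logb_two hl
  have hTL := log_le_logb_two (by linarith : (1 : ℝ) ≤ l)
  calc _ ≤ _ := key
    _ = (2 * logb 2 l + (Fintype.card Y + 1) * log l * logb 2 l) / l := by ring
    _ ≤ 2 * ((Fintype.card Y : ℝ) + 1) * (logb 2 l) ^ 2 / l := by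
        gcongr
        nlinarith [mul_le_mul_of_nonneg_left hTL
          (by positivity : (0 : ℝ) ≤ (Fintype.card Y + 1) * logb 2 l)]

theorem stmt11 {Y : Type*} [Fintype Y] (l : ℕ) (hY2 : 2 ≤ Fintype.card Y)
    (hlY : Fintype.card Y ≤ l)
    (p pt Φp Φpt : Y → ℝ)
    (hp : ∀ y, (1 : ℝ) / l ≤ p y) (hp1 : ∑ y, p y = 1)
    (hpt : ∀ y, (1 : ℝ) / l ≤ pt y) (hpt1 : ∑ y, pt y = 1)
    (hΦp : ∀ y, (1 : ℝ) / l ≤ Φp y) (hΦp1 : ∑ y, Φp y = 1)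
    (hΦpt : ∀ y, (1 : ℝ) / l ≤ Φpt y) (hΦpt1 : ∑ y, Φpt y = 1)
    (hlog1 : ∀ y, |Real.logb 2 (Φp y / p y)| ≤ Real.logb 2 l / l)
    (hlog2 : ∀ y, |Real.logb 2 (Φpt y / pt y)| ≤ Real.logb 2 l / l)
    (htv : ∑ y, |pt y - Φpt y| ≤ ((Fintype.card Y : ℝ) + 1) * Real.log l / l) :
    |(∑ y, pt y * Real.logb 2 (pt y / p y))
        - (∑ y, Φpt y * Real.logb 2 (Φpt y / Φp y))|
      ≤ 2 * ((Fintype.card Y : ℝ) + 1) * (Real.logb 2 l) ^ 2 / l :=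
  stmt11_general l hY2 hlY p pt Φp Φpt hp hpt hpt1 hΦp hΦp1 hΦpt hΦpt1 hlog1 hlog2 htv
end

section
/- For a finite alphabet X and any empirical p.m.f. p on X with denominators dividing N, the number of sequences of length N with empirical type p (the type class T_p) satisfies (N+1)^{-|X|} · 2^{N H(p)} ≤ |T_p| ≤ 2^{N H(p)}, where H is Shannon entropy in bits. -/
open Finset MvPolynomial

section Aux

variable {X : Type*} [Fintype X] [DecidableEq X]

private lemma prod_monomial_one {ι : Type*} (s : Finset ι) (d : ι → (X →₀ ℕ)) :
    ∏ i ∈ s, (monomial (d i) (1 : ℕ)) = monomial (∑ i ∈ s, d i) 1 := by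
  induction s using Finset.cons_induction with
  | empty => simp
  | cons a s ha ih => rw [Finset.prod_cons, Finset.sum_cons, ih, monomial_mul, mul_one]

private lemma aux_typeOf_apply {N : ℕ} (v : Fin N → X) (x : X) :
    (∑ i, Finsupp.single (v i) 1) x = (Finset.univ.filter fun i => v i = x).card := by
  rw [Finsupp.finset_sum_apply, Finset.card_filter]
  refine Finset.sum_congr rfl fun i _ => ?_
  rw [Finsupp.single_apply]

/-- The cardinality of a type class equals the multinomial coefficient. -/
private lemma card_type_class (N : ℕ) (k : X → ℕ) (hk : ∑ x, k x = N) :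
    Fintype.card {v : Fin N → X //
        ∀ x, (Finset.univ.filter fun i => v i = x).card = k x}
      = Nat.multinomial Finset.univ k := by
  classical
  set L : X →₀ ℕ := Finsupp.equivFunOnFinite.symm k with hLdef
  have hLapp : ∀ x, L x = k x := fun x => rfl
  -- first computation of the coefficient
  have e1 : coeff L ((∑ x : X, (MvPolynomial.X x : MvPolynomial X ℕ)) ^ N)
      = Fintype.card {v : Fin N → X //
          ∀ x, (Finset.univ.filter fun i => v i = x).card = k x} := by
    have hpow : (∑ x : X, (MvPolynomial.X x : MvPolynomial X ℕ)) ^ N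
        = ∑ v : Fin N → X, monomial (∑ i, Finsupp.single (v i) 1) (1 : ℕ) := by
      have h1 : (∑ x : X, (MvPolynomial.X x : MvPolynomial X ℕ)) ^ N
          = ∏ _i : Fin N, (∑ x : X, (MvPolynomial.X x : MvPolynomial X ℕ)) := by
        rw [Finset.prod_const, Finset.card_univ, Fintype.card_fin]
      rw [h1, Finset.prod_univ_sum, Fintype.piFinset_univ]
      refine Finset.sum_congr rfl fun v _ => ?_
      rw [← prod_monomial_one]
      refine Finset.prod_congr rfl fun i _ => ?_
      rw [← X_pow_eq_monomial, pow_one]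
    rw [hpow, coeff_sum]
    simp only [coeff_monomial]
    rw [Fintype.card_subtype, Finset.card_filter]
    refine Finset.sum_congr rfl fun v _ => ?_
    have : ((∑ i, Finsupp.single (v i) 1) = L)
        ↔ (∀ x, (Finset.univ.filter fun i => v i = x).card = k x) := by
      constructor
      · intro h x
        rw [← aux_typeOf_apply v x, h, hLapp]
      · intro h
        ext x
        rw [aux_typeOf_apply, hLapp, h]
    simp only [this]
  -- second computation of the coefficient
  have e2 : coeff L ((∑ x : X, (MvPolynomial.X x : MvPolynomial X ℕ)) ^ N)
      = Nat.multinomial Finset.univ k := by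
    rw [Finset.sum_pow_eq_sum_piAntidiag, coeff_sum]
    have hterm : ∀ l : X → ℕ,
        ((Nat.multinomial Finset.univ l : MvPolynomial X ℕ) * ∏ x, (MvPolynomial.X x : MvPolynomial X ℕ) ^ l x)
          = (Nat.multinomial Finset.univ l) • monomial (Finsupp.equivFunOnFinite.symm l) (1 : ℕ) := by
      intro l
      have hprod : (∏ x, (MvPolynomial.X x : MvPolynomial X ℕ) ^ l x)
          = monomial (Finsupp.equivFunOnFinite.symm l) (1 : ℕ) := by
        have : ∀ x : X, (MvPolynomial.X x : MvPolynomial X ℕ) ^ l x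
            = monomial (Finsupp.single x (l x)) 1 := fun x => X_pow_eq_monomial
        rw [Finset.prod_congr rfl fun x _ => this x, prod_monomial_one]
        have hfs : (∑ x : X, Finsupp.single x (l x)) = Finsupp.equivFunOnFinite.symm l := by
          ext y
          rw [Finsupp.finset_sum_apply]
          have h2 : ∀ x : X, (Finsupp.single x (l x)) y = if x = y then l x else 0 := by
            intro x; rw [Finsupp.single_apply]
          rw [Finset.sum_congr rfl fun x _ => h2 x, Finset.sum_ite_eq' Finset.univ y l,
            if_pos (Finset.mem_univ y)]
          rfl
        rw [hfs]
      rw [hprod, nsmul_eq_mul]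
    have hmem : k ∈ Finset.piAntidiag (Finset.univ : Finset X) N :=
      Finset.mem_piAntidiag.2 ⟨hk, fun i _ => Finset.mem_univ i⟩
    rw [Finset.sum_congr rfl fun l _ => by rw [hterm l]]
    rw [Finset.sum_eq_single_of_mem k hmem]
    · rw [coeff_smul, coeff_monomial, hLdef, if_pos rfl]
      simp
    · intro l _ hlk
      rw [coeff_smul, coeff_monomial, if_neg, smul_zero]
      intro hcontra
      exact hlk (Finsupp.equivFunOnFinite.symm.injective (hcontra.trans hLdef))
  rw [← e1, e2]

private lemma fact_pow_le (l d : ℕ) : (l + d).factorial ≤ (l + d) ^ d * l.factorial := by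
  induction d with
  | zero => simp
  | succ d ih =>
      have h1 : (l + (d + 1)).factorial = (l + d + 1) * (l + d).factorial := by
        rw [← Nat.add_assoc, Nat.factorial_succ]
      rw [h1]
      calc (l + d + 1) * (l + d).factorial
          ≤ (l + d + 1) * ((l + d) ^ d * l.factorial) := Nat.mul_le_mul_left _ ih
        _ ≤ (l + d + 1) * ((l + d + 1) ^ d * l.factorial) := by
            exact Nat.mul_le_mul_left _ (Nat.mul_le_mul_right _
              (Nat.pow_le_pow_left (Nat.le_succ _) d))
        _ = (l + (d + 1)) ^ (d + 1) * l.factorial := by ring_nf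
  
private lemma pow_fact_le (k d : ℕ) : k ^ d * k.factorial ≤ (k + d).factorial := by
  induction d with
  | zero => simp
  | succ d ih =>
      have h1 : (k + (d + 1)).factorial = (k + d + 1) * (k + d).factorial := by
        rw [← Nat.add_assoc, Nat.factorial_succ]
      rw [h1, pow_succ]
      calc k ^ d * k * k.factorial = k * (k ^ d * k.factorial) := by ring
        _ ≤ k * (k + d).factorial := Nat.mul_le_mul_left _ ih
        _ ≤ (k + d + 1) * (k + d).factorial :=
            Nat.mul_le_mul_right _ (by omega)

/-- Key single-letter inequality: `k ^ l * k ! ≤ k ^ k * l !`. -/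
private lemma key_nat_ineq (k l : ℕ) : k ^ l * k.factorial ≤ k ^ k * l.factorial := by
  rcases Nat.le_total l k with h | h
  · obtain ⟨d, rfl⟩ := Nat.exists_eq_add_of_le h
    calc (l + d) ^ l * (l + d).factorial
        ≤ (l + d) ^ l * ((l + d) ^ d * l.factorial) :=
          Nat.mul_le_mul_left _ (fact_pow_le l d)
      _ = (l + d) ^ (l + d) * l.factorial := by rw [pow_add]; ring
  · obtain ⟨d, rfl⟩ := Nat.exists_eq_add_of_le h
    calc k ^ (k + d) * k.factorial
        = k ^ k * (k ^ d * k.factorial) := by rw [pow_add]; ring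
      _ ≤ k ^ k * (k + d).factorial := Nat.mul_le_mul_left _ (pow_fact_le k d)

/-- The type `k` is the most probable type under the distribution `k / N`. -/
private lemma max_type (N : ℕ) (k l : X → ℕ) (hk : ∑ x, k x = N) (hl : ∑ x, l x = N) :
    Nat.multinomial Finset.univ l * ∏ x, k x ^ l x
      ≤ Nat.multinomial Finset.univ k * ∏ x, k x ^ k x := by
  classical
  have hkspec := Nat.multinomial_spec (Finset.univ : Finset X) k
  have hlspec := Nat.multinomial_spec (Finset.univ : Finset X) l
  rw [hk] at hkspec
  rw [hl] at hlspec
  have hpos : 0 < (∏ x, (l x).factorial) * (∏ x, (k x).factorial) :=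
    Nat.mul_pos (Finset.prod_pos fun x _ => Nat.factorial_pos _)
      (Finset.prod_pos fun x _ => Nat.factorial_pos _)
  refine Nat.le_of_mul_le_mul_left ?_ hpos
  have middle : (∏ x, (k x ^ l x * (k x).factorial))
      ≤ ∏ x, (k x ^ k x * (l x).factorial) :=
    Finset.prod_le_prod' fun x _ => key_nat_ineq (k x) (l x)
  calc (∏ x, (l x).factorial) * (∏ x, (k x).factorial)
        * (Nat.multinomial Finset.univ l * ∏ x, k x ^ l x)
      = ((∏ x, (l x).factorial) * Nat.multinomial Finset.univ l)
          * ((∏ x, k x ^ l x) * (∏ x, (k x).factorial)) := by ring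
    _ = N.factorial * ∏ x, (k x ^ l x * (k x).factorial) := by
        rw [hlspec, Finset.prod_mul_distrib]
        try ring
    _ ≤ N.factorial * ∏ x, (k x ^ k x * (l x).factorial) :=
        Nat.mul_le_mul_left _ middle
    _ = ((∏ x, (k x).factorial) * Nat.multinomial Finset.univ k)
          * ((∏ x, k x ^ k x) * (∏ x, (l x).factorial)) := by
        rw [hkspec, Finset.prod_mul_distrib]
        try ring
    _ = (∏ x, (l x).factorial) * (∏ x, (k x).factorial)
          * (Nat.multinomial Finset.univ k * ∏ x, k x ^ k x) := by ring

/-- Upper bound in ℕ. -/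
private lemma nat_upper (N : ℕ) (k : X → ℕ) (hk : ∑ x, k x = N) :
    Nat.multinomial Finset.univ k * ∏ x, k x ^ k x ≤ N ^ N := by
  classical
  have h := Finset.sum_pow_eq_sum_piAntidiag (Finset.univ : Finset X) k N
  simp only [Nat.cast_id] at h
  rw [hk] at h
  rw [h]
  exact Finset.single_le_sum (f := fun l => Nat.multinomial Finset.univ l * ∏ x, k x ^ l x)
    (fun l _ => Nat.zero_le _) (Finset.mem_piAntidiag.2 ⟨hk, fun i _ => Finset.mem_univ i⟩)

/-- Lower bound in ℕ. -/
private lemma nat_lower (N : ℕ) (k : X → ℕ) (hk : ∑ x, k x = N) :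
    N ^ N ≤ (N + 1) ^ (Fintype.card X)
      * (Nat.multinomial Finset.univ k * ∏ x, k x ^ k x) := by
  classical
  have h := Finset.sum_pow_eq_sum_piAntidiag (Finset.univ : Finset X) k N
  simp only [Nat.cast_id] at h
  rw [hk] at h
  rw [h]
  have hcard : (Finset.piAntidiag (Finset.univ : Finset X) N).card
      ≤ (N + 1) ^ (Fintype.card X) := by
    have hsub : Finset.piAntidiag (Finset.univ : Finset X) N
        ⊆ Fintype.piFinset fun _ : X => Finset.range (N + 1) := by
      intro l hl
      rw [Finset.mem_piAntidiag] at hl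
      rw [Fintype.mem_piFinset]
      intro x
      rw [Finset.mem_range, Nat.lt_succ_iff, ← hl.1]
      exact Finset.single_le_sum (fun i _ => Nat.zero_le _) (Finset.mem_univ x)
    calc (Finset.piAntidiag (Finset.univ : Finset X) N).card
        ≤ (Fintype.piFinset fun _ : X => Finset.range (N + 1)).card :=
          Finset.card_le_card hsub
      _ = (N + 1) ^ (Fintype.card X) := by
          rw [Fintype.card_piFinset]
          simp
  calc ∑ l ∈ Finset.piAntidiag (Finset.univ : Finset X) N,
        Nat.multinomial Finset.univ l * ∏ x, k x ^ l x
      ≤ ∑ _l ∈ Finset.piAntidiag (Finset.univ : Finset X) N,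
        Nat.multinomial Finset.univ k * ∏ x, k x ^ k x :=
        Finset.sum_le_sum fun l hl =>
          max_type N k l hk (Finset.mem_piAntidiag.1 hl).1
    _ = (Finset.piAntidiag (Finset.univ : Finset X) N).card
          * (Nat.multinomial Finset.univ k * ∏ x, k x ^ k x) := by
        rw [Finset.sum_const, smul_eq_mul]
    _ ≤ (N + 1) ^ (Fintype.card X)
          * (Nat.multinomial Finset.univ k * ∏ x, k x ^ k x) :=
        Nat.mul_le_mul_right _ hcard

end Aux

theorem stmt18 {X : Type*} [Fintype X] [DecidableEq X] (N : ℕ) (hN : 0 < N)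
    (k : X → ℕ) (hk : ∑ x, k x = N) (p : X → ℝ) (hp : ∀ x, p x = (k x : ℝ) / N) :
    ((N : ℝ) + 1) ^ (-(Fintype.card X : ℝ))
        * (2 : ℝ) ^ ((N : ℝ) * (-∑ x, p x * Real.logb 2 (p x)))
      ≤ (Fintype.card {v : Fin N → X //
          ∀ x, (Finset.univ.filter fun i => v i = x).card = k x} : ℝ) ∧
    (Fintype.card {v : Fin N → X //
        ∀ x, (Finset.univ.filter fun i => v i = x).card = k x} : ℝ)
      ≤ (2 : ℝ) ^ ((N : ℝ) * (-∑ x, p x * Real.logb 2 (p x))) := by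
  classical
  have hNR : (0 : ℝ) < N := by exact_mod_cast hN
  set M : ℕ := Nat.multinomial Finset.univ k with hM
  have hcard : (Fintype.card {v : Fin N → X //
      ∀ x, (Finset.univ.filter fun i => v i = x).card = k x} : ℝ) = (M : ℝ) := by
    rw [card_type_class N k hk]
  set K : ℕ := ∏ x, k x ^ k x with hKdef
  have hKpos : 0 < K := Finset.prod_pos fun x _ => by
    rcases Nat.eq_zero_or_pos (k x) with h | h
    · simp [h]
    · exact pow_pos h _
  have hKR : (0 : ℝ) < (K : ℝ) := by exact_mod_cast hKpos
  -- identify the entropy power with N^N / K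
  have hEnt : (2 : ℝ) ^ ((N : ℝ) * (-∑ x, p x * Real.logb 2 (p x)))
      = (N : ℝ) ^ N / (K : ℝ) := by
    have hsum : (N : ℝ) * (-∑ x, p x * Real.logb 2 (p x))
        = ∑ x, (-(k x : ℝ)) * Real.logb 2 (p x) := by
      rw [mul_neg, Finset.mul_sum, ← Finset.sum_neg_distrib]
      refine Finset.sum_congr rfl fun x _ => ?_
      have hx : (N : ℝ) * p x = (k x : ℝ) := by
        rw [hp x]; field_simp
      calc -((N : ℝ) * (p x * Real.logb 2 (p x)))
          = -(((N : ℝ) * p x) * Real.logb 2 (p x)) := by ring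
        _ = (-(k x : ℝ)) * Real.logb 2 (p x) := by rw [hx]; ring
    have hprodform : ∀ (s : Finset X) (g : X → ℝ),
        (2 : ℝ) ^ (∑ x ∈ s, g x) = ∏ x ∈ s, (2 : ℝ) ^ (g x) := by
      intro s g
      induction s using Finset.cons_induction with
      | empty => simp
      | cons a s ha ih =>
          rw [Finset.sum_cons, Finset.prod_cons, Real.rpow_add (by norm_num), ih]
    have hterm : ∀ x : X, (2 : ℝ) ^ ((-(k x : ℝ)) * Real.logb 2 (p x))
        = ((p x) ^ (k x))⁻¹ := by
      intro x
      rcases Nat.eq_zero_or_pos (k x) with h | h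
      · simp [h]
      · have hpx : 0 < p x := by
          rw [hp x]
          positivity
        have h2 : (2 : ℝ) ^ ((-(k x : ℝ)) * Real.logb 2 (p x))
            = ((2 : ℝ) ^ (Real.logb 2 (p x))) ^ (-(k x : ℝ)) := by
          rw [mul_comm]
          exact Real.rpow_mul (by norm_num) _ _
        rw [h2, Real.rpow_logb (by norm_num) (by norm_num) hpx,
          Real.rpow_neg hpx.le, Real.rpow_natCast]
    have hprodval : ∏ x, (p x) ^ (k x) = (K : ℝ) / (N : ℝ) ^ N := by
      have : ∀ x : X, (p x) ^ (k x) = (k x : ℝ) ^ (k x) / (N : ℝ) ^ (k x) := by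
        intro x
        rw [hp x, div_pow]
      rw [Finset.prod_congr rfl fun x _ => this x, Finset.prod_div_distrib,
        Finset.prod_pow_eq_pow_sum, hk, hKdef]
      push_cast
      rfl
    rw [hsum, hprodform, Finset.prod_congr rfl fun x _ => hterm x,
      Finset.prod_inv_distrib, hprodval, inv_div]
  have hup : (M : ℝ) * (K : ℝ) ≤ (N : ℝ) ^ N := by
    have := nat_upper N k hk
    exact_mod_cast this
  have hlow : (N : ℝ) ^ N ≤ ((N : ℝ) + 1) ^ (Fintype.card X) * ((M : ℝ) * (K : ℝ)) := by
    have := nat_lower N k hk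
    exact_mod_cast this
  constructor
  · -- lower bound
    rw [hcard, hEnt]
    have hfac : ((N : ℝ) + 1) ^ (-(Fintype.card X : ℝ))
        = (((N : ℝ) + 1) ^ (Fintype.card X))⁻¹ := by
      rw [Real.rpow_neg (by positivity), Real.rpow_natCast]
    rw [hfac]
    rw [inv_mul_eq_div, div_div, div_le_iff₀ (by positivity)]
    calc (N : ℝ) ^ N ≤ ((N : ℝ) + 1) ^ (Fintype.card X) * ((M : ℝ) * (K : ℝ)) := hlow
      _ = (M : ℝ) * ((K : ℝ) * ((N : ℝ) + 1) ^ (Fintype.card X)) := by ring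
  · -- upper bound
    rw [hcard, hEnt, le_div_iff₀ hKR]
    exact hup
end
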